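/- arXiv:1407.0279 — 5 statements merged into one kernel-verified Lean document; each statement's English description precedes it below -/
import Mathlib

section
/- Let O be the valuation ring of a finite extension E of ℚ_p with valuation v normalized by v(p) = 1, and let M, N ∈ M_n(O) be square matrices with M · N = p · A for some A ∈ GL_n(O). Let d_1 ≤ d_2 ≤ ... ≤ d_n be the valuations of the elementary divisors (Smith normal form diagonal entries) of M, and e_1 ≤ ... ≤ e_n those of N. Then d_i + e_{n+1−i} = 1 for all i; in particular all d_i and all e_i lie in the interval [0, 1]. -/
section aux
variable {E : Type*} [NormedField E] [IsUltrametricDist E] {n : ℕ}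

lemma aux_mul_entry (X Y : Matrix (Fin n) (Fin n) E)
    (hX : ∀ i j, ‖X i j‖ ≤ 1) (hY : ∀ i j, ‖Y i j‖ ≤ 1) (i j : Fin n) : ‖(X * Y) i j‖ ≤ 1 := by
  rw [Matrix.mul_apply]
  refine IsUltrametricDist.norm_sum_le_of_forall_le_of_nonneg zero_le_one fun k _ => ?_
  rw [norm_mul]
  exact mul_le_one₀ (hX i k) (norm_nonneg _) (hY k j)

lemma aux_norm_sign_smul (σ : Equiv.Perm (Fin n)) (x : E) :
    ‖Equiv.Perm.sign σ • x‖ = ‖x‖ := by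
  rcases Int.units_eq_one_or (Equiv.Perm.sign σ) with h | h <;>
    simp [h, Units.smul_def]

lemma aux_det_le (X : Matrix (Fin n) (Fin n) E) (hX : ∀ i j, ‖X i j‖ ≤ 1) : ‖X.det‖ ≤ 1 := by
  rw [Matrix.det_apply]
  refine IsUltrametricDist.norm_sum_le_of_forall_le_of_nonneg zero_le_one fun σ _ => ?_
  rw [aux_norm_sign_smul, norm_prod]
  exact Finset.prod_le_one (fun i _ => norm_nonneg _) (fun i _ => hX _ _)

lemma aux_perm (X : Matrix (Fin n) (Fin n) E) (hX : ∀ i j, ‖X i j‖ ≤ 1)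
    (hdet : ‖X.det‖ = 1) : ∃ σ : Equiv.Perm (Fin n), ∀ i, ‖X (σ i) i‖ = 1 := by
  by_contra h
  push_neg at h
  have key : ∀ σ : Equiv.Perm (Fin n), ‖Equiv.Perm.sign σ • ∏ i, X (σ i) i‖ < 1 := by
    intro σ
    obtain ⟨i, hi⟩ := h σ
    have hi' : ‖X (σ i) i‖ < 1 := lt_of_le_of_ne (hX _ _) hi
    rw [aux_norm_sign_smul, norm_prod, ← Finset.mul_prod_erase _ _ (Finset.mem_univ i)]
    calc ‖X (σ i) i‖ * ∏ j ∈ Finset.univ.erase i, ‖X (σ j) j‖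
        ≤ ‖X (σ i) i‖ * 1 := by
          refine mul_le_mul_of_nonneg_left ?_ (norm_nonneg _)
          exact Finset.prod_le_one (fun j _ => norm_nonneg _) (fun j _ => hX _ _)
      _ < 1 := by rwa [mul_one]
  have hne : (Finset.univ : Finset (Equiv.Perm (Fin n))).Nonempty := Finset.univ_nonempty
  have hle := hne.norm_sum_le_sup'_norm (fun σ => Equiv.Perm.sign σ • ∏ i, X (σ i) i)
  rw [← Matrix.det_apply, hdet] at hle
  have : (Finset.univ.sup' hne fun σ => ‖Equiv.Perm.sign σ • ∏ i, X (σ i) i‖) < 1 :=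
    (Finset.sup'_lt_iff hne).mpr fun σ _ => key σ
  linarith

lemma aux_pigeon1 (σ : Equiv.Perm (Fin n)) (i : Fin n) : ∃ j, i ≤ j ∧ i.rev ≤ σ j := by
  by_contra h
  push_neg at h
  have hcard := Finset.card_le_card_of_injOn σ
    (fun j hj => Finset.mem_Iio.mpr (h j (Finset.mem_Ici.mp hj))) σ.injective.injOn
  rw [Fin.card_Ici, Fin.card_Iio, Fin.val_rev] at hcard
  have := i.isLt
  omega

lemma aux_pigeon2 (σ : Equiv.Perm (Fin n)) (i : Fin n) : ∃ j, j ≤ i ∧ σ j ≤ i.rev := by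
  by_contra h
  push_neg at h
  have hcard := Finset.card_le_card_of_injOn σ
    (fun j hj => Finset.mem_Ioi.mpr (h j (Finset.mem_Iic.mp hj))) σ.injective.injOn
  rw [Fin.card_Iic, Fin.card_Ioi, Fin.val_rev] at hcard
  have := i.isLt
  omega

end aux



/-- let `E` be a finite extension of `ℚ_p` with the (unique) extension of the
p-adic norm (valuation normalized by `v(p) = 1`, i.e. `v(x) = α ↔ ‖x‖ = p^{-α}`), `O` its
valuation ring (elements of norm `≤ 1`).  If `M, N ∈ M_n(O)` satisfy `M N = p A` with
`A ∈ GL_n(O)`, and `d₁ ≤ … ≤ dₙ` (resp. `e₁ ≤ … ≤ eₙ`) are the valuations of the elementary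
divisors of `M` (resp. `N`) — presented by Smith normal forms `M = B₁ D₁ C₁`,
`N = B₂ D₂ C₂` with `B`s, `C`s in `GL_n(O)` — then `dᵢ + e_{n+1-i} = 1` for all `i`, and all
`dᵢ, eᵢ` lie in `[0,1]`. -/
theorem stmt_7 (p : ℕ) [Fact p.Prime] (E : Type*) [NormedField E]
    [Algebra ℚ_[p] E] [FiniteDimensional ℚ_[p] E]
    (hiso : ∀ x : ℚ_[p], ‖algebraMap ℚ_[p] E x‖ = ‖x‖)
    (n : ℕ) (M N A : Matrix (Fin n) (Fin n) E)
    (hMO : ∀ i j, ‖M i j‖ ≤ 1) (hNO : ∀ i j, ‖N i j‖ ≤ 1)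
    (hA : IsUnit A) (hA1 : ∀ i j, ‖A i j‖ ≤ 1) (hA2 : ∀ i j, ‖A⁻¹ i j‖ ≤ 1)
    (hMN : M * N = (p : E) • A)
    (B₁ C₁ B₂ C₂ : Matrix (Fin n) (Fin n) E) (δ₁ δ₂ : Fin n → E) (d e : Fin n → ℝ)
    (hB₁ : IsUnit B₁) (hB₁1 : ∀ i j, ‖B₁ i j‖ ≤ 1) (hB₁2 : ∀ i j, ‖B₁⁻¹ i j‖ ≤ 1)
    (hC₁ : IsUnit C₁) (hC₁1 : ∀ i j, ‖C₁ i j‖ ≤ 1) (hC₁2 : ∀ i j, ‖C₁⁻¹ i j‖ ≤ 1)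
    (hB₂ : IsUnit B₂) (hB₂1 : ∀ i j, ‖B₂ i j‖ ≤ 1) (hB₂2 : ∀ i j, ‖B₂⁻¹ i j‖ ≤ 1)
    (hC₂ : IsUnit C₂) (hC₂1 : ∀ i j, ‖C₂ i j‖ ≤ 1) (hC₂2 : ∀ i j, ‖C₂⁻¹ i j‖ ≤ 1)
    (hM : M = B₁ * Matrix.diagonal δ₁ * C₁) (hN : N = B₂ * Matrix.diagonal δ₂ * C₂)
    (hδ₁ : ∀ i, ‖δ₁ i‖ = (p : ℝ) ^ (-(d i))) (hδ₂ : ∀ i, ‖δ₂ i‖ = (p : ℝ) ^ (-(e i)))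
    (hd : Monotone d) (he : Monotone e) :
    (∀ i : Fin n, d i + e i.rev = 1) ∧
    (∀ i, 0 ≤ d i ∧ d i ≤ 1) ∧ (∀ i, 0 ≤ e i ∧ e i ≤ 1) := by
  haveI : IsUltrametricDist E := by
    refine IsUltrametricDist.isUltrametricDist_of_forall_norm_natCast_le_one fun m => ?_
    have h1 : ((m : E)) = algebraMap ℚ_[p] E (m : ℚ_[p]) := (map_natCast _ m).symm
    rw [h1, hiso]
    simpa using Padic.norm_int_le_one (p := p) (m : ℤ)
  have hp1 : (1 : ℝ) < (p : ℝ) := by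
    exact_mod_cast (Fact.out : p.Prime).one_lt
  have hp0 : (0 : ℝ) < (p : ℝ) := lt_trans one_pos hp1
  have hpE : ‖(p : E)‖ = (p : ℝ)⁻¹ := by
    rw [show ((p : ℕ) : E) = algebraMap ℚ_[p] E (p : ℚ_[p]) by rw [map_natCast], hiso,
      Padic.norm_p]
  have detone : ∀ X : Matrix (Fin n) (Fin n) E, IsUnit X → (∀ i j, ‖X i j‖ ≤ 1) →
      (∀ i j, ‖X⁻¹ i j‖ ≤ 1) → ‖X.det‖ = 1 := by
    intro X hX h1 h2
    have hXd : IsUnit X.det := (Matrix.isUnit_iff_isUnit_det X).mp hX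
    have hmul : X.det * X⁻¹.det = 1 := by
      rw [← Matrix.det_mul, Matrix.mul_nonsing_inv X hXd, Matrix.det_one]
    have h1' := aux_det_le X h1
    have h2' := aux_det_le X⁻¹ h2
    have h3 := congrArg norm hmul
    rw [norm_mul, norm_one] at h3
    nlinarith [norm_nonneg X.det, norm_nonneg X⁻¹.det]
  set U := C₁ * B₂ with hU
  set V := B₁⁻¹ * A * C₂⁻¹ with hV
  have hB₁d : IsUnit B₁.det := (Matrix.isUnit_iff_isUnit_det _).mp hB₁
  have hC₁d : IsUnit C₁.det := (Matrix.isUnit_iff_isUnit_det _).mp hC₁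
  have hB₂d : IsUnit B₂.det := (Matrix.isUnit_iff_isUnit_det _).mp hB₂
  have hC₂d : IsUnit C₂.det := (Matrix.isUnit_iff_isUnit_det _).mp hC₂
  have hAd : IsUnit A.det := (Matrix.isUnit_iff_isUnit_det _).mp hA
  have key : Matrix.diagonal δ₁ * U * Matrix.diagonal δ₂ = (p : E) • V := by
    have e1 : B₁⁻¹ * (M * N) * C₂⁻¹ = Matrix.diagonal δ₁ * U * Matrix.diagonal δ₂ := by
      rw [hM, hN, hU]
      simp only [← Matrix.mul_assoc]
      rw [Matrix.nonsing_inv_mul B₁ hB₁d, Matrix.one_mul,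
        Matrix.mul_assoc _ C₂ C₂⁻¹, Matrix.mul_nonsing_inv C₂ hC₂d, Matrix.mul_one]
    rw [← e1, hMN, hV, Matrix.mul_smul, Matrix.smul_mul]
  have hU1 : ∀ i j, ‖U i j‖ ≤ 1 := aux_mul_entry C₁ B₂ hC₁1 hB₂1
  have hU2 : ∀ i j, ‖U⁻¹ i j‖ ≤ 1 := by
    rw [hU, Matrix.mul_inv_rev]
    exact aux_mul_entry _ _ hB₂2 hC₁2
  have hV1 : ∀ i j, ‖V i j‖ ≤ 1 :=
    aux_mul_entry _ _ (aux_mul_entry _ _ hB₁2 hA1) hC₂2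
  have hV2 : ∀ i j, ‖V⁻¹ i j‖ ≤ 1 := by
    rw [hV, Matrix.mul_inv_rev, Matrix.mul_inv_rev, Matrix.nonsing_inv_nonsing_inv B₁ hB₁d,
      Matrix.nonsing_inv_nonsing_inv C₂ hC₂d, ← Matrix.mul_assoc]
    exact aux_mul_entry _ _ (aux_mul_entry _ _ hC₂1 hA2) hB₁1
  have hUunit : IsUnit U := hC₁.mul hB₂
  have hVunit : IsUnit V :=
    ((Matrix.isUnit_nonsing_inv_iff.mpr hB₁).mul hA).mul (Matrix.isUnit_nonsing_inv_iff.mpr hC₂)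
  have hUdet : ‖U.det‖ = 1 := detone U hUunit hU1 hU2
  have hVdet : ‖V.det‖ = 1 := detone V hVunit hV1 hV2
  have hkey : ∀ i j, (p : ℝ) ^ (-(d i)) * ‖U i j‖ * (p : ℝ) ^ (-(e j))
      = (p : ℝ)⁻¹ * ‖V i j‖ := by
    intro i j
    have hl : (Matrix.diagonal δ₁ * U * Matrix.diagonal δ₂) i j = δ₁ i * U i j * δ₂ j := by
      rw [Matrix.mul_diagonal, Matrix.diagonal_mul]
    have hr : ((p : E) • V) i j = (p : E) * V i j := by
      simp [Matrix.smul_apply, smul_eq_mul]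
    have h2 : δ₁ i * U i j * δ₂ j = (p : E) * V i j := by
      rw [← hl, ← hr, key]
    have h3 := congrArg norm h2
    simp only [norm_mul] at h3
    rwa [hδ₁, hδ₂, hpE] at h3
  have hUV : ∀ i j, ‖V i j‖ = 1 → d i + e j ≤ 1 := by
    intro i j hv
    have h := hkey i j
    rw [hv, mul_one] at h
    have hle : (p : ℝ) ^ (-(1 : ℝ)) ≤ (p : ℝ) ^ (-(d i + e j)) := by
      calc (p : ℝ) ^ (-(1 : ℝ)) = (p : ℝ)⁻¹ := Real.rpow_neg_one _
        _ = (p : ℝ) ^ (-(d i)) * ‖U i j‖ * (p : ℝ) ^ (-(e j)) := h.symm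
        _ ≤ (p : ℝ) ^ (-(d i)) * 1 * (p : ℝ) ^ (-(e j)) := by
            refine mul_le_mul_of_nonneg_right ?_ (Real.rpow_pos_of_pos hp0 _).le
            exact mul_le_mul_of_nonneg_left (hU1 i j) (Real.rpow_pos_of_pos hp0 _).le
        _ = (p : ℝ) ^ (-(d i + e j)) := by
            rw [mul_one, ← Real.rpow_add hp0, neg_add]
    have := (Real.rpow_le_rpow_left_iff hp1).mp hle
    linarith
  have hVU : ∀ i j, ‖U i j‖ = 1 → 1 ≤ d i + e j := by
    intro i j hu
    have h := hkey i j
    rw [hu, mul_one] at h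
    have hle : (p : ℝ) ^ (-(d i + e j)) ≤ (p : ℝ) ^ (-(1 : ℝ)) := by
      calc (p : ℝ) ^ (-(d i + e j)) = (p : ℝ) ^ (-(d i)) * (p : ℝ) ^ (-(e j)) := by
            rw [← Real.rpow_add hp0, neg_add]
        _ = (p : ℝ)⁻¹ * ‖V i j‖ := h
        _ ≤ (p : ℝ)⁻¹ * 1 := mul_le_mul_of_nonneg_left (hV1 i j) (inv_nonneg.mpr hp0.le)
        _ = (p : ℝ) ^ (-(1 : ℝ)) := by rw [mul_one, Real.rpow_neg_one]
    have := (Real.rpow_le_rpow_left_iff hp1).mp hle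
    linarith
  have hd0 : ∀ i, 0 ≤ d i := by
    intro i
    have hD : B₁⁻¹ * M * C₁⁻¹ = Matrix.diagonal δ₁ := by
      rw [hM]
      simp only [← Matrix.mul_assoc]
      rw [Matrix.nonsing_inv_mul B₁ hB₁d, Matrix.one_mul, Matrix.mul_assoc,
        Matrix.mul_nonsing_inv C₁ hC₁d, Matrix.mul_one]
    have h1 := aux_mul_entry _ _ (aux_mul_entry _ _ hB₁2 hMO) hC₁2 i i
    rw [hD, Matrix.diagonal_apply_eq, hδ₁] at h1
    have h2 : (p : ℝ) ^ (-(d i)) ≤ (p : ℝ) ^ (0 : ℝ) := by rwa [Real.rpow_zero]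
    have := (Real.rpow_le_rpow_left_iff hp1).mp h2
    linarith
  have he0 : ∀ i, 0 ≤ e i := by
    intro i
    have hD : B₂⁻¹ * N * C₂⁻¹ = Matrix.diagonal δ₂ := by
      rw [hN]
      simp only [← Matrix.mul_assoc]
      rw [Matrix.nonsing_inv_mul B₂ hB₂d, Matrix.one_mul, Matrix.mul_assoc,
        Matrix.mul_nonsing_inv C₂ hC₂d, Matrix.mul_one]
    have h1 := aux_mul_entry _ _ (aux_mul_entry _ _ hB₂2 hNO) hC₂2 i i
    rw [hD, Matrix.diagonal_apply_eq, hδ₂] at h1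
    have h2 : (p : ℝ) ^ (-(e i)) ≤ (p : ℝ) ^ (0 : ℝ) := by rwa [Real.rpow_zero]
    have := (Real.rpow_le_rpow_left_iff hp1).mp h2
    linarith
  obtain ⟨σ, hσ⟩ := aux_perm V hV1 hVdet
  obtain ⟨τ, hτ⟩ := aux_perm U hU1 hUdet
  have hσ' : ∀ i, d i + e (σ⁻¹ i) ≤ 1 := by
    intro i
    have := hUV (σ (σ⁻¹ i)) (σ⁻¹ i) (hσ (σ⁻¹ i))
    simpa using this
  have hτ' : ∀ i, 1 ≤ d i + e (τ⁻¹ i) := by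
    intro i
    have := hVU (τ (τ⁻¹ i)) (τ⁻¹ i) (hτ (τ⁻¹ i))
    simpa using this
  have hmain : ∀ i : Fin n, d i + e i.rev = 1 := by
    intro i
    have upper : d i + e i.rev ≤ 1 := by
      obtain ⟨j, hij, hr⟩ := aux_pigeon1 σ⁻¹ i
      calc d i + e i.rev ≤ d j + e (σ⁻¹ j) := add_le_add (hd hij) (he hr)
        _ ≤ 1 := hσ' j
    have lower : 1 ≤ d i + e i.rev := by
      obtain ⟨j, hij, hr⟩ := aux_pigeon2 τ⁻¹ i
      calc (1 : ℝ) ≤ d j + e (τ⁻¹ j) := hτ' j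
        _ ≤ d i + e i.rev := add_le_add (hd hij) (he hr)
    linarith
  refine ⟨hmain, fun i => ⟨hd0 i, ?_⟩, fun i => ⟨he0 i, ?_⟩⟩
  · have h1 := hmain i
    have h2 := he0 i.rev
    linarith
  · have h1 := hmain i.rev
    rw [Fin.rev_rev] at h1
    have h2 := hd0 i.rev
    linarith
end

section
/- Let O be the valuation ring of a finite extension E of ℚ_p with valuation v normalized by v(p) = 1, and suppose M, N ∈ M_n(O) satisfy M · N = p · A with A ∈ GL_n(O). Then every eigenvalue λ of M (in a fixed algebraic closure of E) satisfies 0 ≤ v(λ) ≤ 1, where v also denotes the unique extension of the valuation to the algebraic closure. -/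
open Finset

lemma aux_prod_sub_one {L : Type*} [NormedField L] [IsUltrametricDist L]
    {ι : Type*} (s : Finset ι) (f : ι → L) (r : ℝ) (hr0 : 0 ≤ r) (hr : r ≤ 1)
    (h : ∀ i ∈ s, ‖f i - 1‖ ≤ r) : ‖(∏ i ∈ s, f i) - 1‖ ≤ r := by
  classical
  induction s using Finset.induction with
  | empty => simpa using hr0
  | @insert a s ha ih =>
    have hfa : ‖f a - 1‖ ≤ r := h a (mem_insert_self a s)
    have hfa1 : ‖f a‖ ≤ 1 := by
      have h1 : f a = (f a - 1) + 1 := by ring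
      rw [h1]
      refine le_trans (IsUltrametricDist.norm_add_le_max _ _) (max_le (le_trans hfa hr) ?_)
      simp
    have hP : ‖(∏ i ∈ s, f i) - 1‖ ≤ r := ih (fun i hi => h i (mem_insert_of_mem hi))
    rw [Finset.prod_insert ha]
    have key : f a * (∏ i ∈ s, f i) - 1 = f a * ((∏ i ∈ s, f i) - 1) + (f a - 1) := by ring
    rw [key]
    refine le_trans (IsUltrametricDist.norm_add_le_max _ _) (max_le ?_ hfa)
    rw [norm_mul]
    calc ‖f a‖ * ‖(∏ i ∈ s, f i) - 1‖ ≤ 1 * r :=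
          mul_le_mul hfa1 hP (norm_nonneg _) zero_le_one
      _ = r := one_mul r

lemma aux_det_one_sub_ne_zero {L : Type*} [NormedField L] [IsUltrametricDist L]
    {n : ℕ} (C : Matrix (Fin n) (Fin n) L) (r : ℝ) (hr0 : 0 ≤ r) (hr : r < 1)
    (hC : ∀ i j, ‖C i j‖ ≤ r) : (1 - C).det ≠ 0 := by
  classical
  have h1 : ∀ i j, ‖(1 - C) i j‖ ≤ 1 := by
    intro i j
    simp only [Matrix.sub_apply, sub_eq_add_neg]
    refine le_trans (IsUltrametricDist.norm_add_le_max _ _) (max_le ?_ ?_)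
    · rcases eq_or_ne i j with h | h <;> simp [Matrix.one_apply, h]
    · rw [norm_neg]; exact le_trans (hC i j) hr.le
  have hsign : ∀ σ : Equiv.Perm (Fin n), ‖(Equiv.Perm.sign σ : L)‖ = 1 := by
    intro σ
    rcases Int.units_eq_one_or (Equiv.Perm.sign σ) with hs | hs <;> simp [hs]
  have key : ‖(1 - C).det - 1‖ ≤ r := by
    rw [Matrix.det_apply']
    rw [← Finset.add_sum_erase _ _ (Finset.mem_univ (Equiv.refl (Fin n)))]
    have hidterm :
        ‖(Equiv.Perm.sign (Equiv.refl (Fin n)) : L) * (∏ i, (1 - C) ((Equiv.refl (Fin n)) i) i) - 1‖ ≤ r := by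
      simp only [Equiv.Perm.sign_refl, Units.val_one, Int.cast_one, one_mul, Equiv.refl_apply]
      refine aux_prod_sub_one Finset.univ (fun i => (1 - C) i i) r hr0 hr.le (fun i _ => ?_)
      have h2 : (1 - C) i i - 1 = -(C i i) := by
        simp [Matrix.sub_apply, Matrix.one_apply_eq]
      rw [h2, norm_neg]; exact hC i i
    have hrest : ∀ σ ∈ (Finset.univ : Finset (Equiv.Perm (Fin n))).erase (Equiv.refl (Fin n)),
        ‖(Equiv.Perm.sign σ : L) * ∏ i, (1 - C) (σ i) i‖ ≤ r := by
      intro σ hσ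
      have hσne : σ ≠ Equiv.refl (Fin n) := (Finset.mem_erase.mp hσ).1
      obtain ⟨i, hi⟩ : ∃ i, σ i ≠ i := by
        by_contra hcon
        push_neg at hcon
        exact hσne (Equiv.ext hcon)
      rw [norm_mul, hsign, one_mul]
      rw [← Finset.prod_erase_mul _ _ (Finset.mem_univ i), norm_mul]
      have h2 : ‖∏ j ∈ Finset.univ.erase i, (1 - C) (σ j) j‖ ≤ 1 := by
        rw [norm_prod]
        exact Finset.prod_le_one (fun j _ => norm_nonneg _) (fun j _ => h1 (σ j) j)
      have h3 : ‖(1 - C) (σ i) i‖ ≤ r := by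
        simp only [Matrix.sub_apply, Matrix.one_apply_ne hi]
        simpa using hC (σ i) i
      calc ‖∏ j ∈ Finset.univ.erase i, (1 - C) (σ j) j‖ * ‖(1 - C) (σ i) i‖
          ≤ 1 * r := mul_le_mul h2 h3 (norm_nonneg _) zero_le_one
        _ = r := one_mul r
    have hsum := IsUltrametricDist.norm_sum_le_of_forall_le_of_nonneg hr0 hrest
    have heq : ((Equiv.Perm.sign (Equiv.refl (Fin n)) : L) * ∏ i, (1 - C) ((Equiv.refl (Fin n)) i) i)
          + (∑ σ ∈ Finset.univ.erase (Equiv.refl (Fin n)), (Equiv.Perm.sign σ : L) * ∏ i, (1 - C) (σ i) i) - 1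
        = ((Equiv.Perm.sign (Equiv.refl (Fin n)) : L) * (∏ i, (1 - C) ((Equiv.refl (Fin n)) i) i) - 1)
          + ∑ σ ∈ Finset.univ.erase (Equiv.refl (Fin n)), (Equiv.Perm.sign σ : L) * ∏ i, (1 - C) (σ i) i := by
      ring
    rw [heq]
    exact le_trans (IsUltrametricDist.norm_add_le_max _ _) (max_le hidterm hsum)
  intro hdet
  rw [hdet] at key
  simp at key
  linarith



/-- with `E` a finite extension of `ℚ_p` carrying the extension of the p-adic
norm, `O = {‖·‖ ≤ 1}` its valuation ring, if `M, N ∈ M_n(O)` satisfy `M N = p A` with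
`A ∈ GL_n(O)`, then every eigenvalue `λ` of `M` (a root of its characteristic polynomial in
any isometric normed field extension `L` of `E`, e.g. an algebraic closure with its unique
norm) satisfies `0 ≤ v(λ) ≤ 1`, i.e. `p^{-1} ≤ ‖λ‖ ≤ 1`. -/
theorem stmt_8 (p : ℕ) [Fact p.Prime] (E : Type*) [NormedField E]
    [Algebra ℚ_[p] E] [FiniteDimensional ℚ_[p] E]
    (hiso : ∀ x : ℚ_[p], ‖algebraMap ℚ_[p] E x‖ = ‖x‖)
    (n : ℕ) (M N A : Matrix (Fin n) (Fin n) E)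
    (hMO : ∀ i j, ‖M i j‖ ≤ 1) (hNO : ∀ i j, ‖N i j‖ ≤ 1)
    (hA : IsUnit A) (hA1 : ∀ i j, ‖A i j‖ ≤ 1) (hA2 : ∀ i j, ‖A⁻¹ i j‖ ≤ 1)
    (hMN : M * N = (p : E) • A)
    (L : Type*) [NormedField L] (g : E →+* L) (hg : ∀ x : E, ‖g x‖ = ‖x‖)
    (lam : L) (hlam : (Polynomial.map g (Matrix.charpoly M)).IsRoot lam) :
    (p : ℝ)⁻¹ ≤ ‖lam‖ ∧ ‖lam‖ ≤ 1 := by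
  classical
  have hpprime := (Fact.out : p.Prime)
  have hppos : (0:ℝ) < p := by exact_mod_cast hpprime.pos
  -- norms of naturals in E and L
  have hnatE : ∀ k : ℕ, ‖(k : E)‖ ≤ 1 := by
    intro k
    have h1 : ((k : E)) = algebraMap ℚ_[p] E (k : ℚ_[p]) := by
      rw [map_natCast]
    rw [h1, hiso]
    have := Padic.norm_int_le_one (p := p) (k : ℤ)
    simpa using this
  have hnatL : ∀ k : ℕ, ‖(k : L)‖ ≤ 1 := by
    intro k
    have h1 : ((k : L)) = g (k : E) := by rw [map_natCast]
    rw [h1, hg]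
    exact hnatE k
  haveI : IsUltrametricDist E :=
    IsUltrametricDist.isUltrametricDist_of_forall_norm_natCast_le_one hnatE
  haveI : IsUltrametricDist L :=
    IsUltrametricDist.isUltrametricDist_of_forall_norm_natCast_le_one hnatL
  -- p-norms
  have hpE : ‖((p:ℕ) : E)‖ = (p : ℝ)⁻¹ := by
    have h1 : ((p : E)) = algebraMap ℚ_[p] E (p : ℚ_[p]) := by rw [map_natCast]
    rw [h1, hiso]
    exact Padic.norm_p
  have hpL : ‖((p:ℕ) : L)‖ = (p : ℝ)⁻¹ := by
    have h1 : ((p : L)) = g (p : E) := by rw [map_natCast]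
    rw [h1, hg]; exact hpE
  have hpLne : ((p:ℕ) : L) ≠ 0 := by
    intro h
    rw [h, norm_zero] at hpL
    have : (0:ℝ) < (p:ℝ)⁻¹ := by positivity
    linarith [hpL ▸ this]
  set M' : Matrix (Fin n) (Fin n) L := M.map g with hM'
  set B' : Matrix (Fin n) (Fin n) L := (N * A⁻¹).map g with hB'
  have hM'O : ∀ i j, ‖M' i j‖ ≤ 1 := fun i j => by
    rw [hM', Matrix.map_apply, hg]; exact hMO i j
  have hB'O : ∀ i j, ‖B' i j‖ ≤ 1 := by
    intro i j
    rw [hB', Matrix.map_apply, hg]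
    rw [Matrix.mul_apply]
    refine IsUltrametricDist.norm_sum_le_of_forall_le_of_nonneg zero_le_one (fun k _ => ?_)
    rw [norm_mul]
    exact mul_le_one₀ (hNO i k) (norm_nonneg _) (hA2 k j)
  -- M' * B' = p • 1
  have hAinv : A * A⁻¹ = 1 := Matrix.mul_nonsing_inv A ((Matrix.isUnit_iff_isUnit_det A).mp hA)
  have hMBE : M * (N * A⁻¹) = ((p:ℕ) : E) • (1 : Matrix (Fin n) (Fin n) E) := by
    rw [← Matrix.mul_assoc, hMN, Matrix.smul_mul, hAinv]
  have hMB : M' * B' = ((p:ℕ) : L) • (1 : Matrix (Fin n) (Fin n) L) := by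
    rw [hM', hB', ← Matrix.map_mul, hMBE]
    ext i j
    simp only [Matrix.map_apply, Matrix.smul_apply, Matrix.one_apply, smul_eq_mul]
    rw [mul_ite, mul_one, mul_zero, apply_ite g, mul_ite, mul_one, mul_zero]
    congr 1 <;> simp [map_natCast g]
  -- the determinant identity
  have hdet : (lam • (1 : Matrix (Fin n) (Fin n) L) - M').det = 0 := by
    have h1 : ((Matrix.charpoly M).map g) = Matrix.charpoly M' := (Matrix.charpoly_map M g).symm
    have h2 : Polynomial.eval lam (Matrix.charpoly M') = 0 := by
      rw [← h1]; exact hlam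
    rw [Matrix.charpoly] at h2
    have h2' : ((Polynomial.evalRingHom lam).mapMatrix (Matrix.charmatrix M')).det = 0 := by
      rw [← RingHom.map_det]
      exact h2
    have h3 : (Matrix.charmatrix M').map (Polynomial.evalRingHom lam)
        = lam • (1 : Matrix (Fin n) (Fin n) L) - M' := by
      ext i j
      rcases eq_or_ne i j with h | h
      · subst h
        simp [Matrix.charmatrix_apply_eq, Matrix.smul_apply, Matrix.one_apply_eq]
      · simp [Matrix.charmatrix_apply_ne _ _ _ h, Matrix.smul_apply, Matrix.one_apply_ne h,
          Matrix.sub_apply]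
    rw [RingHom.mapMatrix_apply, h3] at h2'
    exact h2'
  constructor
  · -- lower bound
    by_contra hcon
    push_neg at hcon
    have hdet2 : ((lam • (1 : Matrix (Fin n) (Fin n) L) - M') * B').det = 0 := by
      rw [Matrix.det_mul, hdet, zero_mul]
    have hfact : (lam • (1 : Matrix (Fin n) (Fin n) L) - M') * B'
        = (-((p:ℕ):L)) • (1 - (lam * ((p:ℕ):L)⁻¹) • B') := by
      rw [Matrix.sub_mul, Matrix.smul_mul, Matrix.one_mul, hMB]
      rw [smul_sub, smul_smul]
      match_scalars <;> field_simp
    have hC : ∀ i j, ‖((lam * ((p:ℕ):L)⁻¹) • B') i j‖ ≤ ‖lam‖ * (p:ℝ) := by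
      intro i j
      rw [Matrix.smul_apply, smul_eq_mul, norm_mul, norm_mul, norm_inv, hpL, inv_inv]
      calc ‖lam‖ * (p:ℝ) * ‖B' i j‖ ≤ ‖lam‖ * (p:ℝ) * 1 := by
            refine mul_le_mul_of_nonneg_left (hB'O i j) (by positivity)
        _ = ‖lam‖ * (p:ℝ) := mul_one _
    have hr : ‖lam‖ * (p:ℝ) < 1 := by
      have := mul_lt_mul_of_pos_right hcon hppos
      rwa [inv_mul_cancel₀ (ne_of_gt hppos)] at this
    have hne := aux_det_one_sub_ne_zero ((lam * ((p:ℕ):L)⁻¹) • B') (‖lam‖ * (p:ℝ))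
      (by positivity) hr hC
    rw [hfact, Matrix.det_smul] at hdet2
    rcases mul_eq_zero.mp hdet2 with h | h
    · exact (pow_ne_zero _ (neg_ne_zero.mpr hpLne)) h
    · exact hne h
  · -- upper bound
    by_contra hcon
    push_neg at hcon
    have hlamne : lam ≠ 0 := by
      intro h; rw [h, norm_zero] at hcon; linarith
    have hfact : lam • (1 : Matrix (Fin n) (Fin n) L) - M' = lam • (1 - lam⁻¹ • M') := by
      rw [smul_sub, smul_smul, mul_inv_cancel₀ hlamne, one_smul]
    have hC : ∀ i j, ‖(lam⁻¹ • M') i j‖ ≤ ‖lam‖⁻¹ := by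
      intro i j
      rw [Matrix.smul_apply, smul_eq_mul, norm_mul, norm_inv]
      calc ‖lam‖⁻¹ * ‖M' i j‖ ≤ ‖lam‖⁻¹ * 1 :=
            mul_le_mul_of_nonneg_left (hM'O i j) (by positivity)
        _ = ‖lam‖⁻¹ := mul_one _
    have hr : ‖lam‖⁻¹ < 1 := by
      rw [inv_lt_one_iff₀]; right; exact hcon
    have hne := aux_det_one_sub_ne_zero (lam⁻¹ • M') (‖lam‖⁻¹) (by positivity) hr hC
    rw [hfact, Matrix.det_smul] at hdet
    rcases mul_eq_zero.mp hdet with h | h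
    · exact (pow_ne_zero _ hlamne) h
    · exact hne h
end

section
/- Let p be a prime and P, Q ∈ M_n(ℤ_p) commuting matrices (PQ = QP) with P² ≡ P (mod p), Q² ≡ Q (mod p), and PQ ≡ 0 (mod p). Then the limits P̃ = lim_j P^{p^j} and Q̃ = lim_j Q^{p^j} exist in M_n(ℤ_p) and satisfy P̃ · Q̃ = 0. -/
/-!
If `a ≡ b (mod p)` for commuting `a, b`, then `a ^ p ≡ b ^ p (mod p ^ 2)`, and more generally
`a ^ p ^ k ≡ b ^ p ^ k (mod p ^ (k + 1))`: the geometric sum `∑ aⁱ b^(p-1-i)` is `≡ p a^(p-1) ≡ 0`.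
For `X` idempotent mod `p` we have `X ^ p ≡ X`, hence `X ^ p ^ (k+1) ≡ X ^ p ^ k (mod p ^ (k+1))`,
so `X ^ p ^ k` converges `p`-adically. Since `P` and `Q` commute,
`P ^ p ^ k Q ^ p ^ k = (P Q) ^ p ^ k`, which is divisible by `p ^ p ^ k` and tends to `0`.
-/

open Finset Filter Topology

section CentralDivisibility

variable {M : Type*} [Monoid M] {a b c d : M}

theorem mul_dvd_mul_of_forall_commute (hd : ∀ x, Commute d x) (ha : c ∣ a) (hb : d ∣ b) :
    c * d ∣ a * b := by
  obtain ⟨x, rfl⟩ := ha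
  obtain ⟨y, rfl⟩ := hb
  exact ⟨x * y, by rw [mul_assoc, ← mul_assoc x, ← (hd x).eq, mul_assoc, mul_assoc]⟩

theorem dvd_mul_left_of_forall_commute (hc : ∀ x, Commute c x) (hb : c ∣ b) (a : M) :
    c ∣ a * b := by
  simpa using mul_dvd_mul_of_forall_commute hc (one_dvd a) hb

theorem pow_dvd_pow_of_dvd_of_forall_commute (hc : ∀ x, Commute c x) (h : c ∣ a) (k : ℕ) :
    c ^ k ∣ a ^ k := by
  induction k with
  | zero => simp
  | succ k ih =>
    rw [pow_succ, pow_succ]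
    exact mul_dvd_mul_of_forall_commute hc ih h

end CentralDivisibility

section NatCastDivisibility

variable {R : Type*} [Ring R] {p : ℕ} {a b : R}

theorem Commute.natCast_dvd_sub_pow (hab : Commute a b) (h : (p : R) ∣ a - b) (m : ℕ) :
    (p : R) ∣ a ^ m - b ^ m := by
  rw [← hab.geom_sum₂_mul]
  exact dvd_mul_left_of_forall_commute (Nat.cast_commute p) h _

theorem Commute.natCast_dvd_geom_sum₂ (hab : Commute a b) (h : (p : R) ∣ a - b) :
    (p : R) ∣ ∑ i ∈ range p, a ^ i * b ^ (p - 1 - i) := by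
  have hsub : ∑ i ∈ range p, a ^ i * b ^ (p - 1 - i) - p * a ^ (p - 1) =
      ∑ i ∈ range p, a ^ i * (b ^ (p - 1 - i) - a ^ (p - 1 - i)) := by
    rw [← geom_sum₂_self, ← sum_sub_distrib]
    simp only [mul_sub]
  have hdiff : (p : R) ∣ ∑ i ∈ range p, a ^ i * b ^ (p - 1 - i) - p * a ^ (p - 1) := by
    rw [hsub]
    refine dvd_sum fun i _ => dvd_mul_left_of_forall_commute (Nat.cast_commute p) ?_ _
    rw [← dvd_neg, neg_sub]
    exact hab.natCast_dvd_sub_pow h _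
  simpa using dvd_add hdiff (dvd_mul_right (p : R) (a ^ (p - 1)))

theorem Commute.dvd_sub_pow_of_dvd_sub (hab : Commute a b) (h : (p : R) ∣ a - b) (k : ℕ) :
    (p : R) ^ (k + 1) ∣ a ^ p ^ k - b ^ p ^ k := by
  induction k with
  | zero => simpa using h
  | succ k ih =>
    have hab' : Commute (a ^ p ^ k) (b ^ p ^ k) := hab.pow_pow _ _
    rw [pow_succ p k, pow_mul, pow_mul, ← hab'.geom_sum₂_mul, pow_succ']
    refine mul_dvd_mul_of_forall_commute (fun x => (Nat.cast_commute p x).pow_left _)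
      (hab'.natCast_dvd_geom_sum₂ ?_) ih
    exact (dvd_pow_self _ k.succ_ne_zero).trans ih

theorem natCast_dvd_pow_succ_sub_self (h : (p : R) ∣ a * a - a) (m : ℕ) :
    (p : R) ∣ a ^ (m + 1) - a := by
  induction m with
  | zero => simp
  | succ m ih =>
    have : a ^ (m + 2) - a = a * (a ^ (m + 1) - a) + (a * a - a) := by
      rw [mul_sub, ← pow_succ']; abel
    rw [this]
    exact dvd_add (dvd_mul_left_of_forall_commute (Nat.cast_commute p) ih a) h

theorem natCast_pow_dvd_pow_pow_succ_sub (hp : 0 < p) (h : (p : R) ∣ a * a - a) (k : ℕ) :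
    (p : R) ^ (k + 1) ∣ a ^ p ^ (k + 1) - a ^ p ^ k := by
  have hFermat : (p : R) ∣ a ^ p - a := by
    simpa [Nat.sub_add_cancel hp] using natCast_dvd_pow_succ_sub_self h (p - 1)
  simpa [← pow_mul, ← pow_succ'] using
    ((Commute.self_pow a p).symm.dvd_sub_pow_of_dvd_sub hFermat k)

end NatCastDivisibility

theorem Matrix.natCast_dvd_iff {n R : Type*} [Fintype n] [DecidableEq n] [Semiring R]
    {k : ℕ} {A : Matrix n n R} : (k : Matrix n n R) ∣ A ↔ ∀ i j, (k : R) ∣ A i j := by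
  constructor
  · rintro ⟨B, rfl⟩ i j
    exact ⟨B i j, by rw [← nsmul_eq_mul, smul_apply, nsmul_eq_mul]⟩
  · intro h
    choose B hB using h
    exact ⟨Matrix.of B, by ext i j; rw [← nsmul_eq_mul, smul_apply, nsmul_eq_mul, of_apply, hB]⟩

namespace PadicInt

variable {p : ℕ} [Fact p.Prime]

theorem tendsto_zero_of_pow_dvd {u : ℕ → ℤ_[p]} {f : ℕ → ℕ} (hf : Tendsto f atTop atTop)
    (h : ∀ j, (p : ℤ_[p]) ^ f j ∣ u j) : Tendsto u atTop (𝓝 0) := by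
  have hp : 1 < (p : ℝ) := by exact_mod_cast (Fact.out : p.Prime).one_lt
  have hbound : ∀ j, ‖u j‖ ≤ (p : ℝ)⁻¹ ^ f j := fun j => by
    rw [inv_pow, ← zpow_natCast, ← zpow_neg, norm_le_pow_iff_mem_span_pow,
      Ideal.mem_span_singleton]
    exact h j
  exact squeeze_zero_norm hbound <|
    (tendsto_pow_atTop_nhds_zero_of_lt_one (by positivity) (inv_lt_one_of_one_lt₀ hp)).comp hf

end PadicInt

namespace Matrix

theorem exists_tendsto_of_tendsto_sub_nhds_zero {m n R : Type*} [AddCommGroup R] [UniformSpace R]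
    [IsUniformAddGroup R] [NonarchimedeanAddGroup R] [CompleteSpace R] {A : ℕ → Matrix m n R}
    (h : Tendsto (fun j => A (j + 1) - A j) atTop (𝓝 0)) : ∃ L, Tendsto A atTop (𝓝 L) := by
  have hentry : ∀ i k, ∃ l, Tendsto (fun j => A j i k) atTop (𝓝 l) := fun i k =>
    cauchySeq_tendsto_of_complete <| NonarchimedeanAddGroup.cauchySeq_of_tendsto_sub_nhds_zero <|
      ((continuous_id.matrix_elem i k).tendsto 0).comp h
  choose L hL using hentry
  exact ⟨Matrix.of L, tendsto_pi_nhds.2 fun i => tendsto_pi_nhds.2 (hL i)⟩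

variable {p : ℕ} [Fact p.Prime] {n : Type*} [Fintype n] [DecidableEq n]

theorem tendsto_zero_of_natCast_pow_dvd {A : ℕ → Matrix n n ℤ_[p]} {f : ℕ → ℕ}
    (hf : Tendsto f atTop atTop) (h : ∀ j, (p : Matrix n n ℤ_[p]) ^ f j ∣ A j) :
    Tendsto A atTop (𝓝 0) := by
  refine tendsto_pi_nhds.2 fun i => tendsto_pi_nhds.2 fun k => ?_
  refine PadicInt.tendsto_zero_of_pow_dvd hf fun j => ?_
  have hj := h j
  rw [← Nat.cast_pow] at hj ⊢
  exact natCast_dvd_iff.1 hj i k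

theorem exists_tendsto_pow_prime_pow {X : Matrix n n ℤ_[p]}
    (hX : (p : Matrix n n ℤ_[p]) ∣ X * X - X) : ∃ L, Tendsto (fun j => X ^ p ^ j) atTop (𝓝 L) :=
  exists_tendsto_of_tendsto_sub_nhds_zero <|
    tendsto_zero_of_natCast_pow_dvd (tendsto_add_atTop_nat 1)
      (natCast_pow_dvd_pow_pow_succ_sub (Fact.out : p.Prime).pos hX)

theorem tendsto_pow_prime_pow_nhds_zero {X : Matrix n n ℤ_[p]} (hX : (p : Matrix n n ℤ_[p]) ∣ X) :
    Tendsto (fun j => X ^ p ^ j) atTop (𝓝 0) :=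
  tendsto_zero_of_natCast_pow_dvd (tendsto_pow_atTop_atTop_of_one_lt (Fact.out : p.Prime).one_lt)
    fun _ => pow_dvd_pow_of_dvd_of_forall_commute (Nat.cast_commute p) hX _

end Matrix

/-- for commuting `P, Q ∈ M_n(ℤ_p)` idempotent mod `p` with `PQ ≡ 0 (mod p)`,
the limits `P̃ = lim P^{p^j}` and `Q̃ = lim Q^{p^j}` exist and satisfy `P̃ Q̃ = 0`. -/
theorem stmt_10 (p : ℕ) [Fact p.Prime] (n : ℕ) (P Q : Matrix (Fin n) (Fin n) ℤ_[p])
    (hcomm : P * Q = Q * P)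
    (hP : ∀ r s, (p : ℤ_[p]) ∣ (P * P - P) r s)
    (hQ : ∀ r s, (p : ℤ_[p]) ∣ (Q * Q - Q) r s)
    (hPQ : ∀ r s, (p : ℤ_[p]) ∣ (P * Q) r s) :
    ∃ Pt Qt : Matrix (Fin n) (Fin n) ℤ_[p],
      Filter.Tendsto (fun j : ℕ => P ^ p ^ j) Filter.atTop (nhds Pt) ∧
      Filter.Tendsto (fun j : ℕ => Q ^ p ^ j) Filter.atTop (nhds Qt) ∧
      Pt * Qt = 0 := by
  obtain ⟨Pt, hPt⟩ := Matrix.exists_tendsto_pow_prime_pow (Matrix.natCast_dvd_iff.2 hP)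
  obtain ⟨Qt, hQt⟩ := Matrix.exists_tendsto_pow_prime_pow (Matrix.natCast_dvd_iff.2 hQ)
  refine ⟨Pt, Qt, hPt, hQt, tendsto_nhds_unique (hPt.mul hQt) ?_⟩
  simpa only [Commute.mul_pow hcomm] using
    Matrix.tendsto_pow_prime_pow_nhds_zero (Matrix.natCast_dvd_iff.2 hPQ)
end

section
/- Let O be the valuation ring of a finite extension of ℚ_p with valuation v normalized by v(p) = 1. Let t ≥ 1 and N ≥ 1 be integers and let M ∈ M_{Nt}(O) be a matrix (rows and columns indexed from 0) such that every entry in row i is divisible by p^{⌊i/t⌋} (i.e. v(m_{ij}) ≥ ⌊i/t⌋ for all j). Write det(I − X M) = 1 + c_1 X + c_2 X² + ... + c_{Nt} X^{Nt}. Then v(c_s) ≥ Σ_{i=0}^{s−1} ⌊i/t⌋ for every s. In particular v(c_{nt}) ≥ t·n(n−1)/2 for all n ≤ N, so the Newton polygon of det(I − XM) lies above the polygon with vertices (nt, t·n(n−1)/2). -/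
/-- The reverse characteristic polynomial `det(I − X·M)` of a square matrix. -/
noncomputable def revCharPoly {E : Type*} [CommRing E] {n : ℕ}
    (M : Matrix (Fin n) (Fin n) E) : Polynomial E :=
  ((1 : Matrix (Fin n) (Fin n) (Polynomial E)) -
    (Polynomial.X : Polynomial E) • M.map Polynomial.C).det

/-! The coefficient of `X ^ s` in `det (1 - X • M)` is the sum of the principal `s × s` minors
of `-M`. In an ultrametric ring the Leibniz expansion bounds the minor on a set `S` of rows by the
product of the row bounds, `p ^ (-∑_{i ∈ S} ⌊i/t⌋)`, and the ultrametric inequality carries this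
bound over to the sum of minors. Since `i ↦ ⌊i/t⌋` is monotone and the `k`-th smallest element of
a set of naturals is at least `k`, that exponent is at least `∑_{i < s} ⌊i/t⌋`, which equals
`t · n(n-1)/2` for `s = n t`. -/

open Finset Polynomial

theorem revCharPoly_eq_charpolyRev {R : Type*} [CommRing R] {m : ℕ}
    (M : Matrix (Fin m) (Fin m) R) : revCharPoly M = M.charpolyRev :=
  rfl

namespace Matrix

variable {R n : Type*} [Fintype n] [DecidableEq n]

theorem coeff_charpolyRev_eq_sum_minors [CommRing R] (M : Matrix n n R) (k : ℕ) :
    M.charpolyRev.coeff k =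
      ∑ s ∈ univ.powersetCard k, ((-M).submatrix (Subtype.val : s → n) Subtype.val).det := by
  rw [← coeff_det_one_add_X_smul_eq_sum_minors, charpolyRev, sub_eq_add_neg, ← smul_neg,
    Matrix.map_neg _ (map_neg C)]

section Ultrametric

variable [NormedCommRing R] [NormOneClass R] [IsUltrametricDist R]

theorem norm_det_le_prod_of_norm_le (A : Matrix n n R) (w : n → ℝ)
    (hA : ∀ i j, ‖A i j‖ ≤ w i) : ‖A.det‖ ≤ ∏ i, w i := by
  have hw : ∀ i, 0 ≤ w i := fun i => (norm_nonneg _).trans (hA i i)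
  rw [det_apply']
  refine IsUltrametricDist.norm_sum_le_of_forall_le_of_nonneg (prod_nonneg fun i _ => hw i)
    fun σ _ => ?_
  have hsign : ‖((Equiv.Perm.sign σ : ℤ) : R)‖ ≤ 1 := by
    rcases Int.units_eq_one_or (Equiv.Perm.sign σ) with h | h <;> simp [h]
  calc ‖((Equiv.Perm.sign σ : ℤ) : R) * ∏ i, A (σ i) i‖
      ≤ ‖((Equiv.Perm.sign σ : ℤ) : R)‖ * ∏ i, ‖A (σ i) i‖ :=
        (norm_mul_le _ _).trans (by gcongr; exact Finset.norm_prod_le _ _)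
    _ ≤ 1 * ∏ i, w (σ i) := by
        gcongr with i
        exact hA _ _
    _ = ∏ i, w i := by rw [one_mul, Equiv.prod_comp σ w]

theorem norm_coeff_charpolyRev_le (M : Matrix n n R) (w : n → ℝ) (hM : ∀ i j, ‖M i j‖ ≤ w i)
    (k : ℕ) {B : ℝ} (hB0 : 0 ≤ B) (hB : ∀ s ∈ univ.powersetCard k, ∏ i ∈ s, w i ≤ B) :
    ‖M.charpolyRev.coeff k‖ ≤ B := by
  rw [coeff_charpolyRev_eq_sum_minors]
  refine IsUltrametricDist.norm_sum_le_of_forall_le_of_nonneg hB0 fun s hs => ?_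
  calc _ ≤ ∏ i : s, w i :=
        norm_det_le_prod_of_norm_le _ _ fun i j => by simpa using hM i j
    _ = ∏ i ∈ s, w i := prod_coe_sort s w
    _ ≤ B := hB s hs

end Ultrametric

end Matrix

theorem Finset.sum_range_card_le_sum_of_monotone {β : Type*} [AddCommMonoid β] [PartialOrder β]
    [IsOrderedAddMonoid β] {f : ℕ → β} (hf : Monotone f) (T : Finset ℕ) :
    ∑ i ∈ range T.card, f i ≤ ∑ i ∈ T, f i := by
  induction T using Finset.induction_on_max with
  | empty => simp
  | insert a T hlt ih =>
    have haT : a ∉ T := fun h => lt_irrefl a (hlt a h)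
    have hcard : T.card ≤ a := by
      simpa using card_le_card fun x hx => mem_range.mpr (hlt x hx)
    rw [card_insert_of_notMem haT, sum_range_succ, sum_insert haT, add_comm (f a)]
    exact add_le_add ih (hf hcard)

theorem Nat.sum_range_mul_div (t m : ℕ) :
    ∑ i ∈ range (m * t), i / t = t * (m * (m - 1) / 2) := by
  rcases t.eq_zero_or_pos with rfl | ht
  · simp
  rw [← sum_range_id, mul_sum]
  induction m with
  | zero => simp
  | succ m ih =>
    rw [add_mul, one_mul, sum_range_add, ih, sum_range_succ]
    have hblock : ∀ i ∈ range t, (m * t + i) / t = m := fun i hi => by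
      rw [add_comm, Nat.add_mul_div_right _ _ ht, Nat.div_eq_of_lt (mem_range.mp hi), zero_add]
    rw [sum_congr rfl hblock, sum_const, card_range, smul_eq_mul, mul_comm]

theorem Finset.prod_zpow_neg_natCast {ι G : Type*} [DivisionCommMonoid G] (a : G) (s : Finset ι)
    (f : ι → ℕ) : ∏ i ∈ s, a ^ (-(f i : ℤ)) = a ^ (-((∑ i ∈ s, f i : ℕ) : ℤ)) := by
  simp only [zpow_neg, zpow_natCast, prod_inv_distrib, prod_pow_eq_pow_sum]

theorem isUltrametricDist_of_norm_algebraMap_padic (p : ℕ) [Fact p.Prime] (E : Type*)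
    [NormedField E] [Algebra ℚ_[p] E] (hiso : ∀ x : ℚ_[p], ‖algebraMap ℚ_[p] E x‖ = ‖x‖) :
    IsUltrametricDist E :=
  IsUltrametricDist.isUltrametricDist_of_forall_norm_natCast_le_one fun k => by
    rw [← map_natCast (algebraMap ℚ_[p] E), hiso]
    exact_mod_cast Padic.norm_int_le_one (p := p) k

theorem stmt_12_general (p : ℕ) [Fact p.Prime] (E : Type*) [NormedField E]
    [Algebra ℚ_[p] E]
    (hiso : ∀ x : ℚ_[p], ‖algebraMap ℚ_[p] E x‖ = ‖x‖)
    (t N : ℕ)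
    (M : Matrix (Fin (N * t)) (Fin (N * t)) E)
    (hM : ∀ i j, ‖M i j‖ ≤ (p : ℝ) ^ (-(((i : ℕ) / t : ℕ) : ℤ))) :
    (∀ s : ℕ, ‖(revCharPoly M).coeff s‖ ≤
        (p : ℝ) ^ (-((∑ i ∈ Finset.range s, (i / t) : ℕ) : ℤ))) ∧
    (∀ m : ℕ, m ≤ N → ‖(revCharPoly M).coeff (m * t)‖ ≤
        (p : ℝ) ^ (-((t * (m * (m - 1) / 2) : ℕ) : ℤ))) := by
  have := isUltrametricDist_of_norm_algebraMap_padic p E hiso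
  have hp : (1 : ℝ) ≤ p := mod_cast (Fact.out : p.Prime).one_lt.le
  have hcoeff (s : ℕ) : ‖(revCharPoly M).coeff s‖ ≤
      (p : ℝ) ^ (-((∑ i ∈ Finset.range s, (i / t) : ℕ) : ℤ)) := by
    rw [revCharPoly_eq_charpolyRev]
    refine M.norm_coeff_charpolyRev_le _ hM s (by positivity) fun S hS => ?_
    rw [prod_zpow_neg_natCast]
    refine zpow_le_zpow_right₀ hp (neg_le_neg (Nat.cast_le.mpr ?_))
    have hcard : (S.map Fin.valEmbedding).card = s := by simpa using hS
    simpa [hcard] using sum_range_card_le_sum_of_monotone (fun a b h => Nat.div_le_div_right h)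
      (S.map Fin.valEmbedding)
  exact ⟨hcoeff, fun m _ => Nat.sum_range_mul_div t m ▸ hcoeff (m * t)⟩

/-- let `E` be a finite extension of `ℚ_p` with the extension of the p-adic
norm (valuation `v` normalized by `v(p)=1`), `O` its valuation ring.  If `M ∈ M_{Nt}(O)` has
every entry of row `i` of valuation `≥ ⌊i/t⌋` (i.e. norm `≤ p^{-⌊i/t⌋}`), and
`det(I − XM) = 1 + c₁X + …`, then `v(c_s) ≥ Σ_{i<s} ⌊i/t⌋` for every `s`; in particular
`v(c_{nt}) ≥ t·n(n−1)/2` for all `n ≤ N`, so the Newton polygon lies above the polygon with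
vertices `(nt, t·n(n−1)/2)`. -/
theorem stmt_12 (p : ℕ) [Fact p.Prime] (E : Type*) [NormedField E]
    [Algebra ℚ_[p] E] [FiniteDimensional ℚ_[p] E]
    (hiso : ∀ x : ℚ_[p], ‖algebraMap ℚ_[p] E x‖ = ‖x‖)
    (t N : ℕ) (ht : 1 ≤ t) (hN : 1 ≤ N)
    (M : Matrix (Fin (N * t)) (Fin (N * t)) E)
    (hM : ∀ i j, ‖M i j‖ ≤ (p : ℝ) ^ (-(((i : ℕ) / t : ℕ) : ℤ))) :
    (∀ s : ℕ, ‖(revCharPoly M).coeff s‖ ≤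
        (p : ℝ) ^ (-((∑ i ∈ Finset.range s, (i / t) : ℕ) : ℤ))) ∧
    (∀ m : ℕ, m ≤ N → ‖(revCharPoly M).coeff (m * t)‖ ≤
        (p : ℝ) ^ (-((t * (m * (m - 1) / 2) : ℕ) : ℤ))) :=
  stmt_12_general p E hiso t N M hM
end

section
/- Let v be a valuation on a field E with v(p) = 1 and let f(X) = 1 + c_1 X + c_2 X² + ... be a polynomial (or entire power series) over E. Fix t ≥ 1 and define h(nt + s) := t·n(n−1)/2 + n·s for integers n ≥ 0 and 0 ≤ s ≤ t. Suppose v(c_r) ≥ h(r) for all r ≥ 1, and v(c_{kt}) = h(kt) = t·k(k−1)/2 for all k ≥ 1 (in the range where c_{kt} is defined). Then for every n (with the (n+1)-st slope defined), the n-th slope of the Newton polygon of f (slopes listed in non-decreasing order, starting from index 0) lies in the interval [⌊n/t⌋, ⌊n/t⌋ + 1]. -/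
/-! The Newton polygon coincides with `h` at every integer abscissa, so its `n`-th slope is
exactly `⌊n/t⌋`. On `[qt, (q+1)t]` the function `h` is the line `L_q(x) = q x - t q(q+1)/2`,
and `h = max_k L_k`. Each `L_q` has nonpositive intercept and lies below every
`(r, h(r))`, hence below the Newton points: this gives `NP ≥ h`. Conversely an affine
minorant of the Newton points lies below the touching points `(qt, h(qt))` and
`((q+1)t, h((q+1)t))`, hence below `L_q = h` between them: this gives `NP ≤ h`. -/

/-- The additive valuation `v(x) = -log_p ‖x‖` associated to a nonarchimedean norm,
normalized so that `v(p) = 1` when `‖p‖ = p⁻¹`. -/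
noncomputable def addVal (p : ℕ) {E : Type*} [NormedField E] (x : E) : ℝ :=
  -Real.logb p ‖x‖

/-- The Newton polygon of `f = 1 + Σ_{r≥1} c_r X^r` at abscissa `x`: the value at `x` of the
lower convex hull of the points `(r, v(c_r))` (for `c_r ≠ 0`), i.e. the supremum of `L(x)`
over all affine functions `L` lying below all these points. -/
noncomputable def newtonFn (p : ℕ) {E : Type*} [NormedField E]
    (f : PowerSeries E) (x : ℝ) : ℝ :=
  sSup {y : ℝ | ∃ sl b : ℝ, y = sl * x + b ∧
    ∀ r : ℕ, PowerSeries.coeff (R := E) r f ≠ 0 →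
      sl * r + b ≤ addVal p (PowerSeries.coeff (R := E) r f)}

/-- The barrier function `h(nt+s) = t·n(n−1)/2 + n·s` (for `n ≥ 0`, `0 ≤ s < t`),
evaluated via euclidean division. -/
def barrier (t r : ℕ) : ℕ := t * ((r / t) * (r / t - 1) / 2) + (r / t) * (r % t)

open PowerSeries

/-- `barrier t` coincides with this line on `[k t, (k + 1) t]` and lies above it elsewhere. -/
noncomputable def supportLine (t k : ℕ) (x : ℝ) : ℝ := k * x - t * (k * (k + 1) / 2)

lemma barrier_eq_supportLine_div (t m : ℕ) :
    (barrier t m : ℝ) = supportLine t (m / t) m := by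
  have hm : (m : ℝ) = t * (m / t : ℕ) + (m % t : ℕ) := by exact_mod_cast (Nat.div_add_mod m t).symm
  rw [barrier, ← Nat.choose_two_right]
  push_cast [Nat.cast_choose_two]
  rw [supportLine, hm]
  ring

lemma supportLine_le_barrier (t k r : ℕ) (ht : 0 < t) : supportLine t k r ≤ barrier t r := by
  rw [barrier_eq_supportLine_div t r]
  obtain ⟨q, s, hs, rfl⟩ : ∃ q s, s < t ∧ r = t * q + s :=
    ⟨r / t, r % t, Nat.mod_lt r ht, (Nat.div_add_mod r t).symm⟩
  rw [Nat.mul_add_div ht, Nat.div_eq_of_lt hs, add_zero]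
  set d : ℤ := q - k
  -- `t d (d - 1) + 2 d s = (t - s) d (d - 1) + s d (d + 1)`, and `d (d ± 1) ≥ 0` for integers
  have hdiff : supportLine t q (t * q + s : ℕ) - supportLine t k (t * q + s : ℕ) =
      ((t - s) * (d * (d - 1)) + s * (d * (d + 1))) / 2 := by
    simp only [supportLine, d]; push_cast; ring
  have hts : (0 : ℝ) ≤ t - s := sub_nonneg.2 (by exact_mod_cast hs.le)
  have hd₀ : (0 : ℝ) ≤ d * (d - 1) := by
    exact_mod_cast (show 0 ≤ d * (d - 1) by nlinarith [Int.le_self_sq d])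
  have hd₁ : (0 : ℝ) ≤ d * (d + 1) := by
    exact_mod_cast (show 0 ≤ d * (d + 1) by nlinarith [Int.le_self_sq (-d)])
  have : 0 ≤ ((t - s) * (d * (d - 1)) + s * (d * (d + 1)) : ℝ) / 2 := by positivity
  linarith

lemma barrier_succ_sub (t n : ℕ) :
    (barrier t (n + 1) : ℝ) - barrier t n = (n / t : ℕ) := by
  rw [barrier_eq_supportLine_div t (n + 1), barrier_eq_supportLine_div t n, Nat.succ_div]
  split_ifs with hdvd
  · have hn : ((n / t : ℕ) + 1 : ℝ) * t = n + 1 := by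
      exact_mod_cast (Nat.succ_div_of_dvd hdvd) ▸ Nat.div_mul_cancel hdvd
    unfold supportLine; push_cast
    linear_combination -hn
  · unfold supportLine; push_cast; ring

lemma affine_le_of_le_of_le {a a' x sl b sl' b' : ℝ} (hax : a ≤ x) (hxa' : x ≤ a')
    (ha : sl * a + b ≤ sl' * a + b') (ha' : sl * a' + b ≤ sl' * a' + b') :
    sl * x + b ≤ sl' * x + b' := by
  rcases hax.eq_or_lt with rfl | hlt
  · exact ha
  have hpos : 0 < a' - a := by linarith
  -- `(a' - a) g(x) = (a' - x) g(a) + (x - a) g(a')` for the affine difference `g`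
  nlinarith [mul_nonneg (sub_nonneg.2 hax) (sub_nonneg.2 ha'),
    mul_nonneg (sub_nonneg.2 hxa') (sub_nonneg.2 ha)]

section NewtonPolygon

variable (p : ℕ) {E : Type*} [NormedField E] (f : PowerSeries E)

def IsNewtonMinorant (sl b : ℝ) : Prop :=
  ∀ r : ℕ, coeff r f ≠ 0 → sl * r + b ≤ addVal p (coeff r f)

variable {p f}

lemma newtonFn_eq {x y sl₀ b₀ : ℝ} (hy : y = sl₀ * x + b₀) (h₀ : IsNewtonMinorant p f sl₀ b₀)
    (hle : ∀ sl b, IsNewtonMinorant p f sl b → sl * x + b ≤ y) : newtonFn p f x = y :=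
  IsGreatest.csSup_eq ⟨⟨sl₀, b₀, hy, h₀⟩, by rintro _ ⟨sl, b, rfl, h⟩; exact hle sl b h⟩

lemma IsNewtonMinorant.le_zero (hf0 : constantCoeff f = 1) {sl b : ℝ}
    (h : IsNewtonMinorant p f sl b) : b ≤ 0 := by
  simpa [hf0, addVal] using h 0 (by simp [hf0])

variable {t : ℕ}

lemma isNewtonMinorant_supportLine (ht : 0 < t) (hf0 : constantCoeff f = 1)
    (hlow : ∀ r : ℕ, 1 ≤ r → coeff r f ≠ 0 → (barrier t r : ℝ) ≤ addVal p (coeff r f))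
    (k : ℕ) : IsNewtonMinorant p f k (-(t * (k * (k + 1) / 2))) := by
  intro r hr
  rcases Nat.eq_zero_or_pos r with rfl | hr1
  · simp only [coeff_zero_eq_constantCoeff_apply, hf0, addVal, Nat.cast_zero, mul_zero,
      zero_add, norm_one, Real.logb_one, neg_zero, neg_nonpos]
    positivity
  · exact (supportLine_le_barrier t k r ht).trans (hlow r hr1 hr)

lemma IsNewtonMinorant.le_barrier_mul (hf0 : constantCoeff f = 1)
    (htouch : ∀ k : ℕ, 1 ≤ k → coeff (k * t) f ≠ 0 ∧
      addVal p (coeff (k * t) f) = (barrier t (k * t) : ℝ))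
    {sl b : ℝ} (h : IsNewtonMinorant p f sl b) (k : ℕ) :
    sl * (k * t : ℕ) + b ≤ barrier t (k * t) := by
  rcases Nat.eq_zero_or_pos k with rfl | hk
  · simpa [barrier] using h.le_zero hf0
  · exact (htouch k hk).2 ▸ h _ (htouch k hk).1

theorem newtonFn_natCast_eq_barrier (ht : 0 < t) (hf0 : constantCoeff f = 1)
    (hlow : ∀ r : ℕ, 1 ≤ r → coeff r f ≠ 0 → (barrier t r : ℝ) ≤ addVal p (coeff r f))
    (htouch : ∀ k : ℕ, 1 ≤ k → coeff (k * t) f ≠ 0 ∧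
      addVal p (coeff (k * t) f) = (barrier t (k * t) : ℝ))
    (m : ℕ) : newtonFn p f m = barrier t m := by
  set q := m / t
  have hL : ∀ x, supportLine t q x = q * x + -(t * (q * (q + 1) / 2)) := fun x =>
    sub_eq_add_neg _ _
  refine newtonFn_eq ?_ (isNewtonMinorant_supportLine ht hf0 hlow q) fun sl b h => ?_
  · rw [barrier_eq_supportLine_div t m, hL]
  have hq : (barrier t (q * t) : ℝ) = supportLine t q (q * t : ℕ) := by
    rw [barrier_eq_supportLine_div t _, Nat.mul_div_cancel q ht]
  have hq1 : (barrier t ((q + 1) * t) : ℝ) = supportLine t q ((q + 1) * t : ℕ) := by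
    rw [barrier_eq_supportLine_div t _, Nat.mul_div_cancel _ ht]
    unfold supportLine; push_cast; ring
  have hlo := h.le_barrier_mul hf0 htouch q
  have hhi := h.le_barrier_mul hf0 htouch (q + 1)
  rw [hq, hL] at hlo
  rw [hq1, hL] at hhi
  rw [barrier_eq_supportLine_div t m, hL]
  refine affine_le_of_le_of_le ?_ ?_ hlo hhi <;> norm_cast
  · exact Nat.div_mul_le_self m t
  · exact (Nat.lt_div_mul_add ht).le.trans_eq (by ring)

end NewtonPolygon

theorem stmt_13_general (p : ℕ) (E : Type*) [NormedField E]
    (t : ℕ) (ht : 1 ≤ t) (f : PowerSeries E)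
    (hf0 : PowerSeries.constantCoeff (R := E) f = 1)
    (hlow : ∀ r : ℕ, 1 ≤ r → PowerSeries.coeff (R := E) r f ≠ 0 →
      (barrier t r : ℝ) ≤ addVal p (PowerSeries.coeff (R := E) r f))
    (htouch : ∀ k : ℕ, 1 ≤ k → PowerSeries.coeff (R := E) (k * t) f ≠ 0 ∧
      addVal p (PowerSeries.coeff (R := E) (k * t) f) = (barrier t (k * t) : ℝ)) :
    ∀ n : ℕ, ((n / t : ℕ) : ℝ) ≤ newtonFn p f (n + 1) - newtonFn p f n ∧
      newtonFn p f (n + 1) - newtonFn p f n ≤ ((n / t : ℕ) : ℝ) + 1 := by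
  intro n
  have hNP : ∀ m : ℕ, newtonFn p f m = barrier t m :=
    newtonFn_natCast_eq_barrier ht hf0 hlow htouch
  have hslope : newtonFn p f (n + 1) - newtonFn p f n = (n / t : ℕ) := by
    rw [← barrier_succ_sub t n, ← hNP, ← hNP, Nat.cast_succ]
  rw [hslope]
  exact ⟨le_rfl, le_add_of_nonneg_right zero_le_one⟩

/-- let `v` be a valuation on a field `E` with `v(p) = 1` (here: an
ultrametric multiplicative norm with `‖p‖ = p⁻¹`, `v = -log_p‖·‖`) and
`f = 1 + c₁X + c₂X² + …` an entire series over `E`.  If `v(c_r) ≥ h(r)` for all `r ≥ 1`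
(zero coefficients have `v = ∞`, hence satisfy this vacuously) and `v(c_{kt}) = h(kt)`
exactly for all `k ≥ 1`, then the `n`-th slope (in non-decreasing order, starting at index
`0`) of the Newton polygon of `f`, namely `NP(n+1) − NP(n)`, lies in `[⌊n/t⌋, ⌊n/t⌋ + 1]`. -/
theorem stmt_13 (p : ℕ) [Fact p.Prime] (E : Type*) [NormedField E]
    [IsUltrametricDist E] (hpE : ‖(p : E)‖ = (p : ℝ)⁻¹)
    (t : ℕ) (ht : 1 ≤ t) (f : PowerSeries E)
    (hf0 : PowerSeries.constantCoeff (R := E) f = 1)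
    (hlow : ∀ r : ℕ, 1 ≤ r → PowerSeries.coeff (R := E) r f ≠ 0 →
      (barrier t r : ℝ) ≤ addVal p (PowerSeries.coeff (R := E) r f))
    (htouch : ∀ k : ℕ, 1 ≤ k → PowerSeries.coeff (R := E) (k * t) f ≠ 0 ∧
      addVal p (PowerSeries.coeff (R := E) (k * t) f) = (barrier t (k * t) : ℝ)) :
    ∀ n : ℕ, ((n / t : ℕ) : ℝ) ≤ newtonFn p f (n + 1) - newtonFn p f n ∧
      newtonFn p f (n + 1) - newtonFn p f n ≤ ((n / t : ℕ) : ℝ) + 1 :=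
  stmt_13_general p E t ht f hf0 hlow htouch
end
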